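/- Fix κ₀, θ∞ ∈ ℂ and set ξ₁ = −2κ₀ and ξ₂ = θ∞ − 2κ₀. Let U ⊆ ℂ be open and let f, g : U → ℂ be differentiable functions satisfying the Okamoto PIV Hamiltonian system on U, such that f(t) ≠ 0 for all t ∈ U. Define x(t) = −i·f(t)·(f(t)g(t) − θ∞), y(t) = −i/f(t), and s(t) = 2it/3 (where i is the imaginary unit). Then for every t ∈ U: x'(t) = (2i/3)·[(3/2)(2ξ₂−ξ₁)(ξ₁−ξ₂) + (9s(t)/2)x(t) + (12ξ₂−9ξ₁)x(t)y(t) − 9x(t)²y(t)²] and y'(t) = (2i/3)·[−3/2 + 6x(t)y(t)³ + ((9ξ₁−12ξ₂)/2)y(t)² − (9/2)y(t)s(t)]; that is, (x,y) solves the van der Put–Top PIV system in the new time variable s = 2it/3. -/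

import Mathlib

open Complex

/-- Right-hand side of the `x`-equation of the van der Put–Top PIV system. -/
noncomputable def vdPT4Rx (ξ₁ ξ₂ : ℂ) (s x y : ℂ) : ℂ :=
  (3 / 2) * (2 * ξ₂ - ξ₁) * (ξ₁ - ξ₂) + (9 * s / 2) * x
    + (12 * ξ₂ - 9 * ξ₁) * x * y - 9 * x ^ 2 * y ^ 2

/-- Right-hand side of the `y`-equation of the van der Put–Top PIV system. -/
noncomputable def vdPT4Ry (ξ₁ ξ₂ : ℂ) (s x y : ℂ) : ℂ :=
  -3 / 2 + 6 * x * y ^ 3 + ((9 * ξ₁ - 12 * ξ₂) / 2) * y ^ 2 - (9 / 2) * y * s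


/-! Differentiating `x = -i f (fg - θ∞)` and `y = -i/f` along the Okamoto system gives rational
expressions in `f`, `g`, `t`. Since `xy = -(fg - θ∞)`, these agree with the van der Put–Top
right-hand sides at `s = 2it/3` once `i² = -1` is used; the factor `2i/3` is `ds/dt`. -/

noncomputable def okamotoRf (κ₀ t f g : ℂ) : ℂ := 4 * f * g - f ^ 2 - 2 * t * f - 2 * κ₀

noncomputable def okamotoRg (θinf t f g : ℂ) : ℂ := -2 * g ^ 2 + (2 * f + 2 * t) * g - θinf

noncomputable def okamotoToVdPTx (θinf f g : ℂ) : ℂ := -I * f * (f * g - θinf)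

noncomputable def okamotoToVdPTy (f : ℂ) : ℂ := -I / f

section Derivatives

variable {f g : ℂ → ℂ} {f' g' θinf t : ℂ}

theorem HasDerivAt.okamotoToVdPTx (hf : HasDerivAt f f' t) (hg : HasDerivAt g g' t) :
    HasDerivAt (fun t' => okamotoToVdPTx θinf (f t') (g t'))
      (-I * (f' * (f t * g t - θinf) + f t * (f' * g t + f t * g'))) t :=
  ((hf.const_mul (-I)).mul ((hf.mul hg).sub_const θinf)).congr_deriv
    (by simp only [Pi.mul_apply]; ring)

theorem HasDerivAt.okamotoToVdPTy (hf : HasDerivAt f f' t) (h0 : f t ≠ 0) :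
    HasDerivAt (fun t' => okamotoToVdPTy (f t')) (I * f' / f t ^ 2) t :=
  ((hasDerivAt_const t (-I)).div hf h0).congr_deriv (by ring)

end Derivatives

section Identities

variable (κ₀ θinf t f g : ℂ)

theorem okamotoToVdPTx_deriv_eq_vdPT4Rx (hf : f ≠ 0) :
    -I * (okamotoRf κ₀ t f g * (f * g - θinf)
        + f * (okamotoRf κ₀ t f g * g + f * okamotoRg θinf t f g))
      = (2 * I / 3) * vdPT4Rx (-2 * κ₀) (θinf - 2 * κ₀) (2 * I * t / 3)
          (okamotoToVdPTx θinf f g) (okamotoToVdPTy f) := by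
  unfold vdPT4Rx okamotoRf okamotoRg okamotoToVdPTx okamotoToVdPTy
  field_simp
  ring_nf
  simp only [I_sq, I_pow_four]
  ring

theorem okamotoToVdPTy_deriv_eq_vdPT4Ry (hf : f ≠ 0) :
    I * okamotoRf κ₀ t f g / f ^ 2
      = (2 * I / 3) * vdPT4Ry (-2 * κ₀) (θinf - 2 * κ₀) (2 * I * t / 3)
          (okamotoToVdPTx θinf f g) (okamotoToVdPTy f) := by
  unfold vdPT4Ry okamotoRf okamotoToVdPTx okamotoToVdPTy
  field_simp
  simp only [I_sq, I_pow_four]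
  ring

end Identities

theorem Okamoto_to_vdPT_PIV_general
    (κ₀ θinf ξ₁ ξ₂ : ℂ) (hξ₁ : ξ₁ = -2 * κ₀) (hξ₂ : ξ₂ = θinf - 2 * κ₀)
    (U : Set ℂ) (f g : ℂ → ℂ)
    (hreg : ∀ t ∈ U, f t ≠ 0)
    (hf : ∀ t ∈ U, HasDerivAt f
      (4 * f t * g t - (f t) ^ 2 - 2 * t * f t - 2 * κ₀) t)
    (hg : ∀ t ∈ U, HasDerivAt g
      (-2 * (g t) ^ 2 + (2 * f t + 2 * t) * g t - θinf) t) :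
    ∀ t ∈ U,
      HasDerivAt (fun t' => -I * f t' * (f t' * g t' - θinf))
        ((2 * I / 3) * vdPT4Rx ξ₁ ξ₂ (2 * I * t / 3)
          (-I * f t * (f t * g t - θinf)) (-I / f t)) t ∧
      HasDerivAt (fun t' => -I / f t')
        ((2 * I / 3) * vdPT4Ry ξ₁ ξ₂ (2 * I * t / 3)
          (-I * f t * (f t * g t - θinf)) (-I / f t)) t := by
  intro t ht
  subst hξ₁ hξ₂
  have hft : HasDerivAt f (okamotoRf κ₀ t (f t) (g t)) t := hf t ht
  have hgt : HasDerivAt g (okamotoRg θinf t (f t) (g t)) t := hg t ht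
  exact ⟨(hft.okamotoToVdPTx hgt).congr_deriv
      (okamotoToVdPTx_deriv_eq_vdPT4Rx κ₀ θinf t (f t) (g t) (hreg t ht)),
    (hft.okamotoToVdPTy (hreg t ht)).congr_deriv
      (okamotoToVdPTy_deriv_eq_vdPT4Ry κ₀ θinf t (f t) (g t) (hreg t ht))⟩

/-- Theorem 3.2, converse direction: the change of variables
`x = -if(fg-θ∞)`, `y = -i/f`, `s = 2it/3` maps solutions of the Okamoto PIV
Hamiltonian system to solutions of the van der Put–Top PIV system with
`ξ₁ = -2κ₀`, `ξ₂ = θ∞ - 2κ₀`. -/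
theorem Okamoto_to_vdPT_PIV
    (κ₀ θinf ξ₁ ξ₂ : ℂ) (hξ₁ : ξ₁ = -2 * κ₀) (hξ₂ : ξ₂ = θinf - 2 * κ₀)
    (U : Set ℂ) (hU : IsOpen U) (f g : ℂ → ℂ)
    (hreg : ∀ t ∈ U, f t ≠ 0)
    (hf : ∀ t ∈ U, HasDerivAt f
      (4 * f t * g t - (f t) ^ 2 - 2 * t * f t - 2 * κ₀) t)
    (hg : ∀ t ∈ U, HasDerivAt g
      (-2 * (g t) ^ 2 + (2 * f t + 2 * t) * g t - θinf) t) :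
    ∀ t ∈ U,
      HasDerivAt (fun t' => -I * f t' * (f t' * g t' - θinf))
        ((2 * I / 3) * vdPT4Rx ξ₁ ξ₂ (2 * I * t / 3)
          (-I * f t * (f t * g t - θinf)) (-I / f t)) t ∧
      HasDerivAt (fun t' => -I / f t')
        ((2 * I / 3) * vdPT4Ry ξ₁ ξ₂ (2 * I * t / 3)
          (-I * f t * (f t * g t - θinf)) (-I / f t)) t :=
  Okamoto_to_vdPT_PIV_general κ₀ θinf ξ₁ ξ₂ hξ₁ hξ₂ U f g hreg hf hg
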